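/- With c* = 1/5 and u_{c*}(ξ) = c*·sech²(√c*·ξ), the functions w₀(ξ) = -15·sech²(√c*·ξ) + (15/2)·sech⁴(√c*·ξ) and ∂_c u_{c*}(ξ) = sech²(√c*·ξ) - √c*·ξ·tanh(√c*·ξ)·sech²(√c*·ξ) satisfy ⟨u_{c*}, w₀⟩_{L²} + 12⟨u_{c*}, ∂_c u_{c*}⟩_{L²} = 0. -/

import Mathlib

/-!
Substituting `y = √c* ξ` scales both integrals by the same factor `1/√c*`, so it suffices to
check the identity in the variable `y`. There the combined integrand
`u w₀ + 12 u ∂_c u = -(3/5) sech⁴ + (3/2) sech⁶ - (12/5) y tanh y sech⁴` has the explicit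
primitive `(3/5 y + 3/10 tanh y) sech⁴ y`, which vanishes at `±∞`.
-/

open Real MeasureTheory Filter Topology

noncomputable def sech (y : ℝ) : ℝ := 1 / cosh y

lemma sech_pos (y : ℝ) : 0 < sech y := one_div_pos.2 (cosh_pos y)

lemma sech_le_one (y : ℝ) : sech y ≤ 1 := (div_le_one (cosh_pos y)).2 (one_le_cosh y)

lemma tanh_sq_add_sech_sq (y : ℝ) : tanh y ^ 2 + sech y ^ 2 = 1 := by
  have := cosh_pos y
  rw [sech, tanh_eq_sinh_div_cosh]
  field_simp
  linear_combination -cosh_sq y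

lemma abs_le_cosh (y : ℝ) : |y| ≤ cosh y := by
  rw [← cosh_abs]
  exact (self_le_sinh_iff.2 (abs_nonneg y)).trans (sinh_lt_cosh _).le

lemma abs_mul_sech_le_one (y : ℝ) : |y * sech y| ≤ 1 := by
  rw [abs_mul, abs_of_pos (sech_pos y), sech, mul_one_div, div_le_one (cosh_pos y)]
  exact abs_le_cosh y

lemma sech_sq_le_inv_one_add_sq (y : ℝ) : sech y ^ 2 ≤ (1 + y ^ 2)⁻¹ := by
  have hy : y ^ 2 ≤ sinh y ^ 2 := by
    rw [sq_le_sq, abs_sinh]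
    exact self_le_sinh_iff.2 (abs_nonneg y)
  rw [sech, div_pow, one_pow, one_div]
  gcongr
  linarith [cosh_sq y]

lemma hasDerivAt_sech (y : ℝ) : HasDerivAt sech (-(tanh y * sech y)) y := by
  have := cosh_pos y
  refine ((hasDerivAt_cosh y).fun_inv this.ne').congr_of_eventuallyEq ?_ |>.congr_deriv ?_
  · exact Eventually.of_forall fun z => one_div _
  · rw [sech, tanh_eq_sinh_div_cosh]; field_simp

lemma hasDerivAt_tanh (y : ℝ) : HasDerivAt tanh (sech y ^ 2) y := by
  have := cosh_pos y
  have h := (hasDerivAt_sinh y).div (hasDerivAt_cosh y) this.ne'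
  rw [show sinh / cosh = tanh from funext fun z => (tanh_eq_sinh_div_cosh z).symm] at h
  refine h.congr_deriv ?_
  rw [sech]
  field_simp
  linear_combination cosh_sq y

@[fun_prop]
lemma continuous_sech : Continuous sech :=
  continuous_iff_continuousAt.2 fun y => (hasDerivAt_sech y).continuousAt

@[fun_prop]
lemma continuous_tanh : Continuous tanh :=
  continuous_iff_continuousAt.2 fun y => (hasDerivAt_tanh y).continuousAt

lemma tendsto_sech_atBot_sup_atTop : Tendsto sech (atBot ⊔ atTop) (𝓝 0) := by
  have hcosh : Tendsto cosh (atBot ⊔ atTop) atTop :=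
    tendsto_atTop_mono abs_le_cosh (tendsto_abs_atBot_atTop.sup tendsto_abs_atTop_atTop)
  rw [show sech = cosh⁻¹ from funext fun y => one_div (cosh y)]
  exact hcosh.inv_tendsto_atTop

lemma integrable_sech_sq : Integrable fun y => sech y ^ 2 :=
  integrable_inv_one_add_sq.mono' (continuous_sech.pow 2).aestronglyMeasurable
    (Eventually.of_forall fun y => by
      rw [norm_of_nonneg (by positivity)]; exact sech_sq_le_inv_one_add_sq y)

namespace CriticalSoliton

-- The functions `u`, `w₀`, `∂_c u` of the statement, as functions of `y = √c* ξ`.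

noncomputable def u (y : ℝ) : ℝ := 1 / 5 * sech y ^ 2

noncomputable def w₀ (y : ℝ) : ℝ := -15 * sech y ^ 2 + 15 / 2 * sech y ^ 4

noncomputable def dcu (y : ℝ) : ℝ := sech y ^ 2 - y * tanh y * sech y ^ 2

noncomputable def primitive (y : ℝ) : ℝ := (3 / 5 * y + 3 / 10 * tanh y) * sech y ^ 4

lemma abs_w₀_le (y : ℝ) : |w₀ y| ≤ 45 / 2 := by
  have h0 := (sech_pos y).le
  have h1 := sech_le_one y
  have h2 : sech y ^ 2 ≤ 1 := pow_le_one₀ h0 h1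
  have h4 : sech y ^ 4 ≤ 1 := pow_le_one₀ h0 h1
  rw [w₀, abs_le]
  constructor <;> nlinarith [pow_nonneg h0 2, pow_nonneg h0 4]

lemma abs_dcu_le (y : ℝ) : |dcu y| ≤ 2 := by
  have h0 := (sech_pos y).le
  have h2 : sech y ^ 2 ≤ 1 := pow_le_one₀ h0 (sech_le_one y)
  have hy : |y * tanh y * sech y ^ 2| ≤ 1 := by
    calc |y * tanh y * sech y ^ 2| = |y * sech y| * |tanh y| * sech y := by
          rw [abs_mul, abs_mul, abs_mul, abs_pow, abs_of_nonneg h0]; ring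
      _ ≤ 1 * 1 * 1 := by
          gcongr
          exacts [abs_mul_sech_le_one y, (abs_tanh_lt_one y).le, sech_le_one y]
      _ = 1 := by norm_num
  calc |dcu y| ≤ |sech y ^ 2| + |y * tanh y * sech y ^ 2| := abs_sub _ _
    _ ≤ 2 := by rw [abs_of_nonneg (pow_nonneg h0 2)]; linarith

lemma integrable_u_mul {g : ℝ → ℝ} {C : ℝ} (hg : Continuous g) (hC : ∀ y, |g y| ≤ C) :
    Integrable fun y => u y * g y :=
  (integrable_sech_sq.const_mul (1 / 5)).mul_bdd hg.aestronglyMeasurable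
    (Eventually.of_forall hC)

lemma hasDerivAt_primitive (y : ℝ) :
    HasDerivAt primitive (u y * w₀ y + 12 * (u y * dcu y)) y := by
  have h := (((hasDerivAt_id y).const_mul (3 / 5)).add
    ((hasDerivAt_tanh y).const_mul (3 / 10))).mul ((hasDerivAt_sech y).pow 4)
  refine h.congr_deriv ?_
  simp only [id, Pi.add_apply, Pi.pow_apply, u, w₀, dcu]
  linear_combination (-6 / 5 * sech y ^ 4) * tanh_sq_add_sech_sq y

lemma tendsto_primitive : Tendsto primitive (atBot ⊔ atTop) (𝓝 0) := by
  refine squeeze_zero_norm (a := fun y => 9 / 10 * sech y ^ 3) (fun y => ?_) ?_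
  · have h0 := (sech_pos y).le
    obtain ⟨hy₁, hy₂⟩ := abs_le.1 (abs_mul_sech_le_one y)
    have ht : |tanh y * sech y| ≤ 1 := by
      rw [abs_mul, abs_of_nonneg h0]
      exact mul_le_one₀ (abs_tanh_lt_one y).le h0 (sech_le_one y)
    obtain ⟨ht₁, ht₂⟩ := abs_le.1 ht
    have hbound : |3 / 5 * (y * sech y) + 3 / 10 * (tanh y * sech y)| ≤ 9 / 10 := by
      rw [abs_le]; constructor <;> linarith
    rw [Real.norm_eq_abs, show primitive y = (3 / 5 * (y * sech y) + 3 / 10 * (tanh y * sech y))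
      * sech y ^ 3 by unfold primitive; ring, abs_mul, abs_of_nonneg (pow_nonneg h0 3)]
    gcongr
  · simpa using (tendsto_sech_atBot_sup_atTop.pow 3).const_mul (9 / 10)

theorem integral_u_mul_w₀_add_twelve_mul_integral_u_mul_dcu :
    (∫ y, u y * w₀ y) + 12 * ∫ y, u y * dcu y = 0 := by
  have h₁ := integrable_u_mul (by unfold w₀; fun_prop) abs_w₀_le
  have h₂ := integrable_u_mul (by unfold dcu; fun_prop) abs_dcu_le
  rw [← integral_const_mul, ← integral_add h₁ (h₂.const_mul 12),
    integral_of_hasDerivAt_of_tendsto hasDerivAt_primitive (h₁.add (h₂.const_mul 12))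
      (tendsto_primitive.mono_left le_sup_left) (tendsto_primitive.mono_left le_sup_right),
    sub_zero]

end CriticalSoliton

/-- With `c* = 1/5`, the cancellation identity
`⟨u_{c*}, w₀⟩ + 12⟨u_{c*}, ∂_c u_{c*}⟩ = 0` holds. -/
theorem momentum_cancellation :
    let c : ℝ := 1/5
    let u : ℝ → ℝ := fun ξ => c * (1 / Real.cosh (Real.sqrt c * ξ))^2
    let w₀ : ℝ → ℝ := fun ξ => -15 * (1 / Real.cosh (Real.sqrt c * ξ))^2
        + (15/2) * (1 / Real.cosh (Real.sqrt c * ξ))^4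
    let dcu : ℝ → ℝ := fun ξ => (1 / Real.cosh (Real.sqrt c * ξ))^2
        - Real.sqrt c * ξ * Real.tanh (Real.sqrt c * ξ) * (1 / Real.cosh (Real.sqrt c * ξ))^2
    (∫ ξ : ℝ, u ξ * w₀ ξ) + 12 * (∫ ξ : ℝ, u ξ * dcu ξ) = 0 := by
  intro c u w₀ dcu
  have hw₀ := Measure.integral_comp_mul_left
    (fun y => CriticalSoliton.u y * CriticalSoliton.w₀ y) √c
  have hdcu := Measure.integral_comp_mul_left
    (fun y => CriticalSoliton.u y * CriticalSoliton.dcu y) √c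
  beta_reduce at hw₀ hdcu
  change (∫ ξ, CriticalSoliton.u (√c * ξ) * CriticalSoliton.w₀ (√c * ξ))
    + 12 * ∫ ξ, CriticalSoliton.u (√c * ξ) * CriticalSoliton.dcu (√c * ξ) = 0
  rw [hw₀, hdcu, smul_eq_mul, smul_eq_mul, mul_left_comm, ← mul_add,
    CriticalSoliton.integral_u_mul_w₀_add_twelve_mul_integral_u_mul_dcu, mul_zero]
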